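/- Let p_0, …, p_{m-1} be distinct primes and k_0, …, k_{m-1} positive integers. For each i, let ℤ_{(p_i)} be the subring of ℚ of rationals with denominator coprime to p_i, let B_i be an infinite subset of ℝ linearly independent over ℤ_{(p_i)}, and let G_{p_i} be the additive subgroup of ℝ underlying the ℤ_{(p_i)}-submodule spanned by B_i. Let G := ℚ ⊕ ⨁_{i=0}^{m-1} G_{p_i}^{k_i} be the direct sum of these abelian groups, where G_{p_i}^{k_i} is the direct sum of k_i copies of G_{p_i}. Then: (1) for each i ∈ {0, …, m-1}, the quotient G / p_i G is infinite; and (2) for every prime q ∉ {p_0, …, p_{m-1}}, qG = G. (That is, the singular primes of G are exactly p_0, …, p_{m-1}.) -/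

import Mathlib

/-- The set of rationals expressible as `a / b` with `b` not divisible by `p`,
i.e. the localization `ℤ_{(p)}` realized inside `ℚ`. -/
def ZLocSet (p : ℕ) : Set ℚ :=
  {q : ℚ | ∃ a b : ℤ, ¬ (p : ℤ) ∣ b ∧ q = (a : ℚ) / (b : ℚ)}

/-- The additive subgroup of `ℝ` underlying the `ℤ_{(p)}`-submodule spanned by `B`:
the additive closure of all products `q * b` with `q ∈ ℤ_{(p)}` and `b ∈ B`. -/
def GpSubgroup (p : ℕ) (B : Set ℝ) : AddSubgroup ℝ :=
  AddSubgroup.closure {y : ℝ | ∃ q ∈ ZLocSet p, ∃ b ∈ B, y = (q : ℝ) * b}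

/-- `B ⊆ ℝ` is linearly independent over `ℤ_{(p)}`: any finite `ℤ_{(p)}`-linear
combination of elements of `B` which vanishes has all coefficients zero. -/
def LinIndepOverZLoc (p : ℕ) (B : Set ℝ) : Prop :=
  ∀ (t : Finset ℝ) (c : ℝ → ℚ), ↑t ⊆ B → (∀ x ∈ t, c x ∈ ZLocSet p) →
    (∑ x ∈ t, (c x : ℝ) * x) = 0 → ∀ x ∈ t, c x = 0

/-- The subgroup `nG = {n • g : g ∈ G}` of an abelian group `G`. -/
def nSMulSubgroup (G : Type*) [AddCommGroup G] (n : ℕ) : AddSubgroup G where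
  carrier := Set.range fun g : G => n • g
  zero_mem' := ⟨0, smul_zero n⟩
  add_mem' := by
    rintro _ _ ⟨g, rfl⟩ ⟨g', rfl⟩
    exact ⟨g + g', smul_add n g g'⟩
  neg_mem' := by
    rintro _ ⟨g, rfl⟩
    exact ⟨-g, by simp [smul_neg]⟩

/-! `G_p` is a module over `ℤ_{(p)}` in which `B` is independent and `p` is not a unit, so two
distinct elements of `B` never differ by an element of `p G_p`: `B` injects into `G_p / p G_p`,
onto which `G / p G` maps through a coordinate projection. A prime `q ≠ p` is a unit of
`ℤ_{(p)}`, so each generator `c b` of `G_p` is `q • ((c / q) b)`; hence `G_p`, and with it `ℚ` and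
`G`, is `q`-divisible. -/

lemma mem_ZLocSet_iff {p : ℕ} {x : ℚ} : x ∈ ZLocSet p ↔ ¬ p ∣ x.den := by
  constructor
  · rintro ⟨a, b, hb, rfl⟩ hden
    rw [← Rat.divInt_eq_div] at hden
    exact hb ((Int.natCast_dvd_natCast.2 hden).trans (Rat.den_dvd a b))
  · intro h
    exact ⟨x.num, x.den, by exact_mod_cast h, (Rat.num_div_den x).symm⟩

def zLocSubring {p : ℕ} (hp : p.Prime) : Subring ℚ where
  carrier := ZLocSet p
  mul_mem' {x y} hx hy := by
    rw [mem_ZLocSet_iff] at *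
    exact fun h => hp.not_dvd_mul hx hy (h.trans (Rat.mul_den_dvd x y))
  one_mem' := mem_ZLocSet_iff.2 (by simpa using hp.ne_one)
  add_mem' {x y} hx hy := by
    rw [mem_ZLocSet_iff] at *
    exact fun h => hp.not_dvd_mul hx hy (h.trans (Rat.add_den_dvd x y))
  zero_mem' := mem_ZLocSet_iff.2 (by simpa using hp.ne_one)
  neg_mem' {x} hx := by
    rw [mem_ZLocSet_iff] at *
    rwa [Rat.neg_den]

lemma inv_natCast_mem_zLocSubring {p n : ℕ} (hp : p.Prime) (hn : ¬ p ∣ n) :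
    (n : ℚ)⁻¹ ∈ zLocSubring hp := by
  have hn0 : n ≠ 0 := by rintro rfl; exact hn (dvd_zero p)
  show _ ∈ ZLocSet p
  rwa [mem_ZLocSet_iff, Rat.inv_natCast_den, if_neg hn0]

lemma not_isUnit_natCast_zLocSubring {p : ℕ} (hp : p.Prime) : ¬ IsUnit (p : zLocSubring hp) := by
  rintro ⟨⟨_, ⟨u, hu⟩, hpu, -⟩, rfl⟩
  have hu' : u = (p : ℚ)⁻¹ := eq_inv_of_mul_eq_one_right (congrArg Subtype.val hpu)
  rw [hu'] at hu
  exact (mem_ZLocSet_iff.1 hu) (by rw [Rat.inv_natCast_den, if_neg hp.ne_zero])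

lemma zLocSubring_smul_def {p : ℕ} (hp : p.Prime) (r : zLocSubring hp) (x : ℝ) :
    r • x = ((r : ℚ) : ℝ) * x := by
  rw [Subring.smul_def, Rat.smul_def]

lemma LinIndepOverZLoc.linearIndepOn {p : ℕ} (hp : p.Prime) {B : Set ℝ}
    (hind : LinIndepOverZLoc p B) : LinearIndepOn (zLocSubring hp) id B := by
  rw [linearIndepOn_iff]
  intro l hl hl0
  have hcoeff : ∀ x ∈ l.support, ((l x : ℚ)) = 0 := by
    refine hind l.support (fun x => l x) (Finsupp.mem_supported _ _ |>.1 hl) (fun x _ => (l x).2) ?_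
    rw [Finsupp.linearCombination_apply, Finsupp.sum] at hl0
    simpa only [id, zLocSubring_smul_def] using hl0
  refine Finsupp.ext fun x => ?_
  by_cases hx : x ∈ l.support
  · exact Subtype.ext (hcoeff x hx)
  · exact Finsupp.notMem_support_iff.1 hx

lemma gpSubgroup_le_span {p : ℕ} (hp : p.Prime) (B : Set ℝ) :
    GpSubgroup p B ≤ (Submodule.span (zLocSubring hp) B).toAddSubgroup := by
  refine AddSubgroup.closure_le _ |>.2 ?_
  rintro _ ⟨c, hc, b, hb, rfl⟩
  rw [← zLocSubring_smul_def hp ⟨c, hc⟩]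
  exact Submodule.smul_mem _ _ (Submodule.subset_span hb)

/-- Comparing the coefficients of `a` in `a - b = r • x` shows that `r` has an inverse. -/
lemma LinearIndepOn.isUnit_of_sub_eq_smul {R M : Type*} [CommRing R] [AddCommGroup M]
    [Module R M] {s : Set M} (hs : LinearIndepOn R id s) {a b : M} (ha : a ∈ s) (hb : b ∈ s)
    (hab : a ≠ b) {r : R} {x : M} (hx : x ∈ Submodule.span R s) (h : a - b = r • x) :
    IsUnit r := by
  obtain ⟨l, rfl⟩ := (Finsupp.mem_span_iff_linearCombination R s x).1 hx
  have hv : LinearIndependent R (Subtype.val : s → M) := hs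
  have hl : Finsupp.single ⟨a, ha⟩ 1 = Finsupp.single ⟨b, hb⟩ 1 + r • l := hv <| by
    simp only [map_add, map_smul, Finsupp.linearCombination_single, one_smul, ← h]
    abel
  have hla := congrArg (fun f => f ⟨a, ha⟩) hl
  simp only [Finsupp.single_eq_same, Finsupp.coe_add, Finsupp.coe_smul, Pi.add_apply,
    Pi.smul_apply, smul_eq_mul] at hla
  rw [Finsupp.single_eq_of_ne (by simpa using hab), zero_add] at hla
  exact IsUnit.of_mul_eq_one _ hla.symm

lemma mem_gpSubgroup_of_mem {p : ℕ} (hp : p.Prime) {B : Set ℝ} {b : ℝ} (hb : b ∈ B) :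
    b ∈ GpSubgroup p B :=
  AddSubgroup.subset_closure ⟨1, (zLocSubring hp).one_mem, b, hb, by simp⟩

lemma infinite_quotient_nSMulSubgroup_gpSubgroup {p : ℕ} (hp : p.Prime) {B : Set ℝ}
    (hB : B.Infinite) (hind : LinIndepOverZLoc p B) :
    Infinite (GpSubgroup p B ⧸ nSMulSubgroup (GpSubgroup p B) p) := by
  have := hB.to_subtype
  refine Infinite.of_injective (fun b : B => (⟨b, mem_gpSubgroup_of_mem hp b.2⟩ : GpSubgroup p B)
    |> QuotientAddGroup.mk) fun a b hab => Subtype.ext ?_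
  obtain ⟨x, hx⟩ := QuotientAddGroup.eq.1 hab
  by_contra hne
  refine not_isUnit_natCast_zLocSubring hp <| (hind.linearIndepOn hp).isUnit_of_sub_eq_smul
    b.2 a.2 (Ne.symm hne) (gpSubgroup_le_span hp B x.2) ?_
  rw [Nat.cast_smul_eq_nsmul, ← AddSubgroup.coe_nsmul, show p • x = _ from hx]
  simp only [AddSubgroup.coe_add, AddSubgroup.coe_neg]
  abel

lemma infinite_quotient_nSMulSubgroup_of_surjective {G H : Type*} [AddCommGroup G]
    [AddCommGroup H] {f : G →+ H} (hf : Function.Surjective f) (n : ℕ)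
    [Infinite (H ⧸ nSMulSubgroup H n)] : Infinite (G ⧸ nSMulSubgroup G n) := by
  have hle : nSMulSubgroup G n ≤ (nSMulSubgroup H n).comap f := by
    rintro _ ⟨g, rfl⟩
    exact ⟨f g, (map_nsmul f n g).symm⟩
  exact Infinite.of_surjective _ <| QuotientAddGroup.map_surjective_of_surjective _ _ f
    (QuotientAddGroup.mk_surjective.comp hf) hle

lemma nSMulSubgroup_eq_top_iff {G : Type*} [AddCommGroup G] {n : ℕ} :
    nSMulSubgroup G n = ⊤ ↔ Function.Surjective fun g : G => n • g :=
  AddSubgroup.eq_top_iff' _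

lemma AddSubgroup.nsmul_surjective_of_subset_image {A : Type*} [AddCommGroup A] {S : Set A}
    {n : ℕ} (hS : S ⊆ (fun a => n • a) '' S) :
    Function.Surjective fun y : AddSubgroup.closure S => n • y := by
  rintro ⟨x, hx⟩
  have hle : closure S ≤ (closure S).map (nsmulAddMonoidHom n) := by
    rw [AddMonoidHom.map_closure]
    exact closure_mono hS
  obtain ⟨y, hy, hyx⟩ := hle hx
  exact ⟨⟨y, hy⟩, Subtype.ext hyx⟩

lemma gpSubgroup_nsmul_surjective {p q : ℕ} (hp : p.Prime) (hq : ¬ p ∣ q) (B : Set ℝ) :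
    Function.Surjective fun y : GpSubgroup p B => q • y := by
  refine AddSubgroup.nsmul_surjective_of_subset_image ?_
  rintro _ ⟨c, hc, b, hb, rfl⟩
  have hq0 : (q : ℝ) ≠ 0 := Nat.cast_ne_zero.2 (by rintro rfl; exact hq (dvd_zero p))
  refine ⟨((c * (q : ℚ)⁻¹ : ℚ) : ℝ) * b,
    ⟨_, (zLocSubring hp).mul_mem hc (inv_natCast_mem_zLocSubring hp hq), b, hb, rfl⟩, ?_⟩
  simp only [nsmul_eq_mul, Rat.cast_mul, Rat.cast_inv, Rat.cast_natCast]
  field_simp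

lemma rat_nsmul_surjective {n : ℕ} (hn : n ≠ 0) : Function.Surjective fun x : ℚ => n • x :=
  fun x => ⟨x / n, by simp only [nsmul_eq_mul]; field_simp⟩

theorem singular_primes_of_direct_sum_general (m : ℕ) (p : Fin m → ℕ) (hp : ∀ i, (p i).Prime)
    (k : Fin m → ℕ) (hk : ∀ i, 0 < k i)
    (B : Fin m → Set ℝ) (hB : ∀ i, (B i).Infinite)
    (hind : ∀ i, LinIndepOverZLoc (p i) (B i)) :
    (∀ i : Fin m,
      Infinite ((ℚ × ((i' : Fin m) → Fin (k i') → (GpSubgroup (p i') (B i')))) ⧸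
        nSMulSubgroup (ℚ × ((i' : Fin m) → Fin (k i') → (GpSubgroup (p i') (B i')))) (p i))) ∧
    ∀ q : ℕ, q.Prime → (∀ i : Fin m, q ≠ p i) →
      nSMulSubgroup (ℚ × ((i' : Fin m) → Fin (k i') → (GpSubgroup (p i') (B i')))) q = ⊤ := by
  refine ⟨fun i => ?_, fun q hq hqp => ?_⟩
  · have := infinite_quotient_nSMulSubgroup_gpSubgroup (hp i) (hB i) (hind i)
    let π := (Pi.evalAddMonoidHom (fun _ : Fin (k i) => GpSubgroup (p i) (B i)) ⟨0, hk i⟩).comp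
      ((Pi.evalAddMonoidHom (fun i' => Fin (k i') → GpSubgroup (p i') (B i')) i).comp
        (AddMonoidHom.snd ℚ _))
    have hπ : Function.Surjective π :=
      (Function.surjective_eval _).comp ((Function.surjective_eval i).comp Prod.snd_surjective)
    exact infinite_quotient_nSMulSubgroup_of_surjective hπ (p i)
  · have hpq (i : Fin m) : ¬ p i ∣ q := fun h =>
      hqp i ((Nat.prime_dvd_prime_iff_eq (hp i) hq).1 h).symm
    exact nSMulSubgroup_eq_top_iff.2 <| (rat_nsmul_surjective hq.ne_zero).prodMap <|
      Function.Surjective.piMap fun i => Function.Surjective.piMap fun _ =>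
        gpSubgroup_nsmul_surjective (hp i) (hpq i) (B i)

/-- The singular primes of `G = ℚ ⊕ ⨁ᵢ G_{pᵢ}^{kᵢ}` are exactly `p₀, …, p_{m-1}`:
`G/pᵢG` is infinite for each `i`, and `qG = G` for any prime `q` outside the list. -/
theorem singular_primes_of_direct_sum (m : ℕ) (p : Fin m → ℕ) (hp : ∀ i, (p i).Prime)
    (hdist : Function.Injective p) (k : Fin m → ℕ) (hk : ∀ i, 0 < k i)
    (B : Fin m → Set ℝ) (hB : ∀ i, (B i).Infinite)
    (hind : ∀ i, LinIndepOverZLoc (p i) (B i)) :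
    (∀ i : Fin m,
      Infinite ((ℚ × ((i' : Fin m) → Fin (k i') → (GpSubgroup (p i') (B i')))) ⧸
        nSMulSubgroup (ℚ × ((i' : Fin m) → Fin (k i') → (GpSubgroup (p i') (B i')))) (p i))) ∧
    ∀ q : ℕ, q.Prime → (∀ i : Fin m, q ≠ p i) →
      nSMulSubgroup (ℚ × ((i' : Fin m) → Fin (k i') → (GpSubgroup (p i') (B i')))) q = ⊤ :=
  singular_primes_of_direct_sum_general m p hp k hk B hB hind
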